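/- arXiv:1211.6542 — 3 statements merged into one kernel-verified Lean document; each statement's English description precedes it below -/
import Mathlib

section
/- Let $\Omega \subset \mathbb{R}^N$ be a bounded open set, $p > 1$, $q > p-1$, $q_* = q/(q+1-p)$, $C_1 > 0$, $\ell \in L^1(\Omega)$ with $\ell \geq 0$, and $\mu$ a (signed) Radon measure on $\Omega$. Let $u \in W^{1,p}_{loc}(\Omega)$ with $|\nabla u|^q \in L^1_{loc}(\Omega)$ satisfy $-\Delta_p u + H(x,u,\nabla u) = \mu$ in the distributional sense, where $|H(x,u,\xi)| \leq C_1 |\xi|^q + \ell(x)$. Then for every $\zeta \in C_c^\infty(\Omega)$ with $\zeta \geq 0$: $\left|\int_\Omega \zeta^{q_*} d\mu\right| \leq (C_1 + q_* - 1)\int_\Omega |\nabla u|^q \zeta^{q_*} dx + \int_\Omega |\nabla \zeta|^{q_*} dx + \int_\Omega \ell\, \zeta^{q_*} dx$. -/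
open MeasureTheory

open Filter Topology Set


lemma abs_integral_le_of_abs_le {α : Type*} [MeasurableSpace α] {μ : Measure α} {f g : α → ℝ}
    (hg : Integrable g μ) (h : ∀ᵐ x ∂μ, |f x| ≤ g x) :
    |∫ x, f x ∂μ| ≤ ∫ x, g x ∂μ := by
  by_cases hf : Integrable f μ
  · calc |∫ x, f x ∂μ| ≤ ∫ x, |f x| ∂μ := by
          simpa [Real.norm_eq_abs] using norm_integral_le_integral_norm (μ := μ) f
      _ ≤ ∫ x, g x ∂μ := integral_mono_ae hf.abs hg h
  · rw [integral_undef hf]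
    simpa using integral_nonneg_of_ae (h.mono fun x hx => (abs_nonneg _).trans hx)

lemma young_aux {p q a b t : ℝ} (hp : 1 < p) (hq : p - 1 < q) (ha : 0 ≤ a) (hb : 0 ≤ b)
    (ht : 0 < t) :
    q / (q + 1 - p) * (a ^ (p - 1) * (t ^ (q / (q + 1 - p) - 1) * b)) ≤
      (q / (q + 1 - p) - 1) * (a ^ q * t ^ (q / (q + 1 - p))) + b ^ (q / (q + 1 - p)) := by
  set r : ℝ := q / (q + 1 - p) with hrdef
  have h1 : 0 < q + 1 - p := by linarith
  have hq0 : 0 < q := by linarith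
  have hp1 : 0 < p - 1 := by linarith
  have hr1 : 1 < r := by rw [hrdef, lt_div_iff₀ h1]; linarith
  have hr0 : 0 < r := zero_lt_one.trans hr1
  set A : ℝ := a * t ^ (r / q) with hA
  have hA0 : 0 ≤ A := mul_nonneg ha (Real.rpow_nonneg ht.le _)
  have hconj : (q / (p - 1)).HolderConjugate r := by
    refine Real.holderConjugate_iff.mpr ⟨?_, ?_⟩
    · rw [lt_div_iff₀ hp1]; linarith
    · rw [hrdef, inv_div]
      field_simp; ring
  have hyoung := Real.young_inequality_of_nonneg (Real.rpow_nonneg hA0 (p - 1)) hb hconj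
  have e1 : (A ^ (p - 1)) ^ (q / (p - 1)) = A ^ q := by
    rw [← Real.rpow_mul hA0]
    congr 1
    field_simp
  rw [e1] at hyoung
  have harith : r / q * (p - 1) = r - 1 := by
    rw [hrdef]; field_simp; ring
  have harith2 : r / q * q = r := by field_simp
  have e3 : r * ((p - 1) / q) = r - 1 := by
    rw [← harith]; ring
  have eA1 : A ^ (p - 1) = a ^ (p - 1) * t ^ (r - 1) := by
    rw [hA, Real.mul_rpow ha (Real.rpow_nonneg ht.le _), ← Real.rpow_mul ht.le, harith]
  have e2 : A ^ q = a ^ q * t ^ r := by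
    rw [hA, Real.mul_rpow ha (Real.rpow_nonneg ht.le _), ← Real.rpow_mul ht.le, harith2]
  have hqp1 : q / (p - 1) ≠ 0 := by positivity
  calc r * (a ^ (p - 1) * (t ^ (r - 1) * b)) = r * (A ^ (p - 1) * b) := by rw [eA1]; ring
    _ ≤ r * (A ^ q / (q / (p - 1)) + b ^ r / r) := mul_le_mul_of_nonneg_left hyoung hr0.le
    _ = r * ((p - 1) / q) * A ^ q + b ^ r := by
        rw [mul_add, div_div_eq_mul_div, mul_div_assoc]
        field_simp
    _ = (r - 1) * (a ^ q * t ^ r) + b ^ r := by rw [e3, e2]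


/-- Lemma 4.2(i): if `u` is a distributional solution of
`-Δ_p u + H(x,u,∇u) = μ` in `Ω` (with `μ = μ⁺ - μ⁻` a finite signed Radon measure)
and `|H(x,s,ξ)| ≤ C₁|ξ|^q + ℓ(x)`, then for every `ζ ∈ C_c^∞(Ω)`, `ζ ≥ 0`,
`|∫ ζ^{q_*} dμ| ≤ (C₁+q_*-1) ∫ |∇u|^q ζ^{q_*} + ∫ |∇ζ|^{q_*} + ∫ ℓ ζ^{q_*}`,
where `q_* = q/(q+1-p)`. -/
theorem stmt6 (N : ℕ) (Ω : Set (EuclideanSpace ℝ (Fin N)))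
    (hΩo : IsOpen Ω) (hΩb : Bornology.IsBounded Ω)
    (p q C₁ : ℝ) (hp : 1 < p) (hq : p - 1 < q) (hC₁ : 0 < C₁)
    (ℓ : EuclideanSpace ℝ (Fin N) → ℝ) (hℓpos : ∀ x, 0 ≤ ℓ x)
    (hℓint : IntegrableOn ℓ Ω volume)
    (μp μm : Measure (EuclideanSpace ℝ (Fin N)))
    [IsFiniteMeasure μp] [IsFiniteMeasure μm]
    (H : EuclideanSpace ℝ (Fin N) → ℝ → EuclideanSpace ℝ (Fin N) → ℝ)
    (hH : ∀ x ∈ Ω, ∀ (t : ℝ) (ξ : EuclideanSpace ℝ (Fin N)),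
      |H x t ξ| ≤ C₁ * ‖ξ‖ ^ q + ℓ x)
    (u : EuclideanSpace ℝ (Fin N) → ℝ)
    (Du : EuclideanSpace ℝ (Fin N) → EuclideanSpace ℝ (Fin N))
    (hu : Measurable u) (hDu : Measurable Du)
    (hDuq : LocallyIntegrableOn (fun x => ‖Du x‖ ^ q) Ω volume)
    -- weak formulation: for every test function `φ` one has
    -- `∫ |∇u|^{p-2} ∇u·∇φ + ∫ H(x,u,∇u) φ = ∫ φ dμ⁺ - ∫ φ dμ⁻`
    (hweak : ∀ φ : EuclideanSpace ℝ (Fin N) → ℝ, ContDiff ℝ (⊤ : ℕ∞) φ →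
      HasCompactSupport φ → tsupport φ ⊆ Ω →
      (∫ x in Ω, ‖Du x‖ ^ (p - 2) * (inner ℝ (Du x) (gradient φ x) : ℝ) ∂volume)
        + (∫ x in Ω, H x (u x) (Du x) * φ x ∂volume)
        = (∫ x, φ x ∂μp) - ∫ x, φ x ∂μm) :
    ∀ ζ : EuclideanSpace ℝ (Fin N) → ℝ, ContDiff ℝ (⊤ : ℕ∞) ζ → HasCompactSupport ζ →
      tsupport ζ ⊆ Ω → (∀ x, 0 ≤ ζ x) →
      |(∫ x, ζ x ^ (q / (q + 1 - p)) ∂μp) - ∫ x, ζ x ^ (q / (q + 1 - p)) ∂μm| ≤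
        (C₁ + q / (q + 1 - p) - 1) *
            (∫ x in Ω, ‖Du x‖ ^ q * ζ x ^ (q / (q + 1 - p)) ∂volume)
          + (∫ x in Ω, ‖gradient ζ x‖ ^ (q / (q + 1 - p)) ∂volume)
          + ∫ x in Ω, ℓ x * ζ x ^ (q / (q + 1 - p)) ∂volume := by
  intro ζ hζs hζc hζΩ hζ0
  set r : ℝ := q / (q + 1 - p) with hrdef
  have hE : MeasurableSet Ω := hΩo.measurableSet
  have h1 : 0 < q + 1 - p := by linarith
  have hq0 : 0 < q := by linarith
  have hr1 : 1 < r := by rw [hrdef, lt_div_iff₀ h1]; linarith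
  have hr0 : 0 < r := zero_lt_one.trans hr1
  set K := tsupport ζ with hKdef
  have hKc : IsCompact K := hζc
  have hKm : MeasurableSet K := hKc.measurableSet
  have hζcont : Continuous ζ := hζs.continuous
  obtain ⟨x₀, hx₀⟩ := hζcont.exists_forall_ge_of_hasCompactSupport hζc
  set M : ℝ := ζ x₀ with hMdef
  have hM0 : 0 ≤ M := hζ0 x₀
  -- gradient of ζ vanishes off K
  have hgradK : ∀ x, x ∉ K → gradient ζ x = 0 := by
    intro x hx
    have hf : fderiv ℝ ζ x = 0 := by
      by_contra h
      exact hx (support_fderiv_subset (𝕜 := ℝ) h)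
    show (InnerProductSpace.toDual ℝ _).symm (fderiv ℝ ζ x) = 0
    rw [hf, map_zero]
  have hgradcont : Continuous (gradient ζ) := by
    have h1 : Continuous (fderiv ℝ ζ) := hζs.continuous_fderiv (by simp)
    exact ((InnerProductSpace.toDual ℝ _).symm.continuous).comp h1
  -- |∇ζ|^r is integrable on Ω
  have hgradrc : Continuous fun x => ‖gradient ζ x‖ ^ r :=
    (hgradcont.norm).rpow_const (fun x => Or.inr hr0.le)
  have hgradr0 : ∀ x, x ∉ K → ‖gradient ζ x‖ ^ r = 0 := by
    intro x hx
    rw [hgradK x hx, norm_zero, Real.zero_rpow hr0.ne']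
  have hgint : IntegrableOn (fun x => ‖gradient ζ x‖ ^ r) Ω volume := by
    have hcs : HasCompactSupport fun x => ‖gradient ζ x‖ ^ r := by
      apply HasCompactSupport.intro hKc hgradr0
    exact (hgradrc.integrable_of_hasCompactSupport hcs).integrableOn
  -- |Du|^q is integrable on K
  have hDuK : IntegrableOn (fun x => ‖Du x‖ ^ q) K volume :=
    hDuq.integrableOn_compact_subset hζΩ hKc
  have mDuq : Measurable fun x => ‖Du x‖ ^ q :=
    (Real.continuous_rpow_const hq0.le).measurable.comp hDu.norm
  -- indicator integrability transfer
  have indInt : ∀ h : EuclideanSpace ℝ (Fin N) → ℝ, IntegrableOn h K volume →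
      Integrable (K.indicator h) (volume.restrict Ω) := by
    intro h hh
    rw [integrable_indicator_iff hKm, IntegrableOn, Measure.restrict_restrict hKm,
      Set.inter_eq_left.mpr hζΩ]
    exact hh
  have hζM : ∀ x, ζ x ≤ M := hx₀
  have hψcont : ∀ ε : ℝ, Continuous fun y => (ζ y + ε) ^ r := fun ε =>
    (hζcont.add continuous_const).rpow_const fun x => Or.inr hr0.le
  have hψbd : ∀ ε : ℝ, 0 < ε → ε ≤ 1 → ∀ y, (ζ y + ε) ^ r ≤ (M + 1) ^ r := by
    intro ε hε0 hε1 y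
    exact Real.rpow_le_rpow (add_nonneg (hζ0 y) hε0.le) (by linarith [hζM y]) hr0.le
  -- the key inequality for each positive ε
  have key : ∀ ε : ℝ, 0 < ε → ε ≤ 1 →
      |(∫ x, ((ζ x + ε) ^ r - ε ^ r) ∂μp) - ∫ x, ((ζ x + ε) ^ r - ε ^ r) ∂μm| ≤
        (C₁ + r - 1) *
            (∫ x in Ω, K.indicator (fun y => ‖Du y‖ ^ q * (ζ y + ε) ^ r) x ∂volume)
          + (∫ x in Ω, ‖gradient ζ x‖ ^ r ∂volume)
          + ∫ x in Ω, K.indicator (fun y => ℓ y * (ζ y + ε) ^ r) x ∂volume := by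
    intro ε hε0 hε1
    set φ : EuclideanSpace ℝ (Fin N) → ℝ := fun x => (ζ x + ε) ^ r - ε ^ r with hφdef
    have hζε : ∀ x, 0 < ζ x + ε := fun x => add_pos_of_nonneg_of_pos (hζ0 x) hε0
    have hsm : ContDiff ℝ (⊤ : ℕ∞) φ := by
      have h2 : ContDiff ℝ (⊤ : ℕ∞) fun x => (ζ x + ε) ^ r := by
        rw [contDiff_iff_contDiffAt]
        intro x
        exact (Real.contDiffAt_rpow_const_of_ne (hζε x).ne').comp x
          ((hζs.contDiffAt).add contDiffAt_const)
      exact h2.sub contDiff_const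
    have hsupp : Function.support φ ⊆ K := by
      intro x hx
      by_contra hxK
      have hz : ζ x = 0 := image_eq_zero_of_notMem_tsupport hxK
      apply hx
      simp [hφdef, hz]
    have htsupp : tsupport φ ⊆ K := closure_minimal hsupp (isClosed_tsupport ζ)
    have hcs : HasCompactSupport φ := IsCompact.of_isClosed_subset hKc (isClosed_closure) htsupp
    have hts : tsupport φ ⊆ Ω := htsupp.trans hζΩ
    -- gradient of φ
    have hgradφ : ∀ x, gradient φ x = (r * (ζ x + ε) ^ (r - 1)) • gradient ζ x := by
      intro x
      have hdζ : HasFDerivAt ζ (fderiv ℝ ζ x) x := (hζs.differentiable (by simp) x).hasFDerivAt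
      have hg : HasDerivAt (fun t : ℝ => (t + ε) ^ r) (r * (ζ x + ε) ^ (r - 1)) (ζ x) := by
        have h0 : HasDerivAt (fun t : ℝ => t + ε) 1 (ζ x) := (hasDerivAt_id _).add_const ε
        have h1 : HasDerivAt (fun s : ℝ => s ^ r) (r * (ζ x + ε) ^ (r - 1)) (ζ x + ε) :=
          Real.hasDerivAt_rpow_const (Or.inl (hζε x).ne')
        simpa [Function.comp_def] using h1.comp (ζ x) h0
      have hφ' : HasFDerivAt φ ((r * (ζ x + ε) ^ (r - 1)) • fderiv ℝ ζ x) x := by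
        have h2 := hg.comp_hasFDerivAt x hdζ
        exact h2.sub_const (ε ^ r)
      have h3 : fderiv ℝ φ x = (r * (ζ x + ε) ^ (r - 1)) • fderiv ℝ ζ x := hφ'.fderiv
      show (InnerProductSpace.toDual ℝ _).symm (fderiv ℝ φ x) = _
      rw [h3, _root_.map_smul]
      rfl
    have heq := hweak φ hsm hcs hts
    set indDu : EuclideanSpace ℝ (Fin N) → ℝ :=
      K.indicator fun y => ‖Du y‖ ^ q * (ζ y + ε) ^ r with hindDu
    set indL : EuclideanSpace ℝ (Fin N) → ℝ :=
      K.indicator fun y => ℓ y * (ζ y + ε) ^ r with hindL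
    -- integrability
    have hIDu : Integrable indDu (volume.restrict Ω) := by
      apply indInt
      apply Integrable.mono' (hDuK.const_mul ((M + 1) ^ r))
      · exact (mDuq.mul ((hψcont ε).measurable)).aestronglyMeasurable
      · apply ae_of_all
        intro y
        have h4 : 0 ≤ ‖Du y‖ ^ q := Real.rpow_nonneg (norm_nonneg _) _
        have h5 : 0 ≤ (ζ y + ε) ^ r := Real.rpow_nonneg (hζε y).le _
        rw [Real.norm_eq_abs, abs_of_nonneg (mul_nonneg h4 h5)]
        calc ‖Du y‖ ^ q * (ζ y + ε) ^ r ≤ ‖Du y‖ ^ q * (M + 1) ^ r :=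
              mul_le_mul_of_nonneg_left (hψbd ε hε0 hε1 y) h4
          _ = (M + 1) ^ r * ‖Du y‖ ^ q := mul_comm _ _
    have hIL : Integrable indL (volume.restrict Ω) := by
      apply indInt
      apply Integrable.mono' ((hℓint.mono_set hζΩ).const_mul ((M + 1) ^ r))
      · exact ((hℓint.mono_set hζΩ).aestronglyMeasurable.mul
          (hψcont ε).aestronglyMeasurable)
      · apply ae_of_all
        intro y
        have h5 : 0 ≤ (ζ y + ε) ^ r := Real.rpow_nonneg (hζε y).le _
        rw [Real.norm_eq_abs, abs_of_nonneg (mul_nonneg (hℓpos y) h5)]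
        calc ℓ y * (ζ y + ε) ^ r ≤ ℓ y * (M + 1) ^ r :=
              mul_le_mul_of_nonneg_left (hψbd ε hε0 hε1 y) (hℓpos y)
          _ = (M + 1) ^ r * ℓ y := mul_comm _ _
    -- pointwise bounds
    have hb1 : ∀ x, |‖Du x‖ ^ (p - 2) * (inner ℝ (Du x) (gradient φ x) : ℝ)| ≤
        (r - 1) * indDu x + ‖gradient ζ x‖ ^ r := by
      intro x
      by_cases hxK : x ∈ K
      · rw [hindDu, Set.indicator_of_mem hxK, hgradφ x, real_inner_smul_right]
        by_cases hDu0 : Du x = 0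
        · rw [hDu0]
          simp only [inner_zero_left, mul_zero, abs_zero]
          exact add_nonneg (mul_nonneg (by linarith)
            (mul_nonneg (Real.rpow_nonneg (norm_nonneg _) _)
              (Real.rpow_nonneg (hζε x).le _))) (Real.rpow_nonneg (norm_nonneg _) _)
        · have hDun : 0 < ‖Du x‖ := norm_pos_iff.mpr hDu0
          have hc0 : 0 ≤ r * (ζ x + ε) ^ (r - 1) :=
            mul_nonneg hr0.le (Real.rpow_nonneg (hζε x).le _)
          have hDup2 : 0 ≤ ‖Du x‖ ^ (p - 2) := Real.rpow_nonneg (norm_nonneg _) _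
          have hstep : ‖Du x‖ ^ (p - 2) * ‖Du x‖ = ‖Du x‖ ^ (p - 1) := by
            rw [← Real.rpow_add_one hDun.ne' (p - 2)]
            congr 1
            ring
          calc |‖Du x‖ ^ (p - 2) * (r * (ζ x + ε) ^ (r - 1) * (inner ℝ (Du x) (gradient ζ x) : ℝ))|
              = ‖Du x‖ ^ (p - 2) * (r * (ζ x + ε) ^ (r - 1)) *
                  |(inner ℝ (Du x) (gradient ζ x) : ℝ)| := by
                rw [abs_mul, abs_mul, abs_of_nonneg hDup2, abs_of_nonneg hc0]; ring
            _ ≤ ‖Du x‖ ^ (p - 2) * (r * (ζ x + ε) ^ (r - 1)) * (‖Du x‖ * ‖gradient ζ x‖) := by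
                apply mul_le_mul_of_nonneg_left (abs_real_inner_le_norm _ _)
                positivity
            _ = r * (‖Du x‖ ^ (p - 1) * ((ζ x + ε) ^ (r - 1) * ‖gradient ζ x‖)) := by
                rw [← hstep]; ring
            _ ≤ (r - 1) * (‖Du x‖ ^ q * (ζ x + ε) ^ r) + ‖gradient ζ x‖ ^ r :=
                young_aux hp hq (norm_nonneg _) (norm_nonneg _) (hζε x)
      · rw [hgradφ x, hgradK x hxK, smul_zero, inner_zero_right, mul_zero, abs_zero,
          hindDu, Set.indicator_of_notMem hxK]
        simp [Real.zero_rpow hr0.ne']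
    have hb2 : ∀ x ∈ Ω, |H x (u x) (Du x) * φ x| ≤ C₁ * indDu x + indL x := by
      intro x hxΩ
      by_cases hxK : x ∈ K
      · rw [hindDu, hindL, Set.indicator_of_mem hxK, Set.indicator_of_mem hxK]
        have hφ0 : 0 ≤ φ x := sub_nonneg.mpr
          (Real.rpow_le_rpow hε0.le (by linarith [hζ0 x]) hr0.le)
        have hφle : φ x ≤ (ζ x + ε) ^ r := sub_le_self _ (Real.rpow_nonneg hε0.le _)
        have hH' := hH x hxΩ (u x) (Du x)
        calc |H x (u x) (Du x) * φ x| = |H x (u x) (Du x)| * φ x := by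
              rw [abs_mul, abs_of_nonneg hφ0]
          _ ≤ (C₁ * ‖Du x‖ ^ q + ℓ x) * (ζ x + ε) ^ r := by
              apply mul_le_mul hH' hφle hφ0
              exact add_nonneg (mul_nonneg hC₁.le
                (Real.rpow_nonneg (norm_nonneg _) _)) (hℓpos x)
          _ = C₁ * (‖Du x‖ ^ q * (ζ x + ε) ^ r) + ℓ x * (ζ x + ε) ^ r := by ring
      · have hz : ζ x = 0 := image_eq_zero_of_notMem_tsupport hxK
        have hφ0 : φ x = 0 := by simp [hφdef, hz]
        rw [hφ0, mul_zero, abs_zero, hindDu, hindL, Set.indicator_of_notMem hxK,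
          Set.indicator_of_notMem hxK, mul_zero, add_zero]
    -- combine
    have habs1 : |∫ x in Ω, ‖Du x‖ ^ (p - 2) * (inner ℝ (Du x) (gradient φ x) : ℝ) ∂volume| ≤
        (r - 1) * (∫ x in Ω, indDu x ∂volume) + ∫ x in Ω, ‖gradient ζ x‖ ^ r ∂volume := by
      have hInt : Integrable (fun x => (r - 1) * indDu x + ‖gradient ζ x‖ ^ r)
          (volume.restrict Ω) := (hIDu.const_mul _).add hgint
      calc |∫ x in Ω, ‖Du x‖ ^ (p - 2) * (inner ℝ (Du x) (gradient φ x) : ℝ) ∂volume|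
          ≤ ∫ x in Ω, ((r - 1) * indDu x + ‖gradient ζ x‖ ^ r) ∂volume :=
            abs_integral_le_of_abs_le hInt (ae_of_all _ hb1)
        _ = (r - 1) * (∫ x in Ω, indDu x ∂volume) + ∫ x in Ω, ‖gradient ζ x‖ ^ r ∂volume := by
            rw [integral_add (hIDu.const_mul _) hgint, integral_const_mul]
    have habs2 : |∫ x in Ω, H x (u x) (Du x) * φ x ∂volume| ≤
        C₁ * (∫ x in Ω, indDu x ∂volume) + ∫ x in Ω, indL x ∂volume := by
      have hInt : Integrable (fun x => C₁ * indDu x + indL x) (volume.restrict Ω) :=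
        (hIDu.const_mul _).add hIL
      calc |∫ x in Ω, H x (u x) (Du x) * φ x ∂volume|
          ≤ ∫ x in Ω, (C₁ * indDu x + indL x) ∂volume := by
            apply abs_integral_le_of_abs_le hInt
            exact (ae_restrict_iff' hE).mpr (ae_of_all _ hb2)
        _ = C₁ * (∫ x in Ω, indDu x ∂volume) + ∫ x in Ω, indL x ∂volume := by
            rw [integral_add (hIDu.const_mul _) hIL, integral_const_mul]
    calc |(∫ x, ((ζ x + ε) ^ r - ε ^ r) ∂μp) - ∫ x, ((ζ x + ε) ^ r - ε ^ r) ∂μm|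
        = |(∫ x in Ω, ‖Du x‖ ^ (p - 2) * (inner ℝ (Du x) (gradient φ x) : ℝ) ∂volume)
            + ∫ x in Ω, H x (u x) (Du x) * φ x ∂volume| := by rw [heq]
      _ ≤ |∫ x in Ω, ‖Du x‖ ^ (p - 2) * (inner ℝ (Du x) (gradient φ x) : ℝ) ∂volume|
            + |∫ x in Ω, H x (u x) (Du x) * φ x ∂volume| := abs_add_le _ _
      _ ≤ ((r - 1) * (∫ x in Ω, indDu x ∂volume) + ∫ x in Ω, ‖gradient ζ x‖ ^ r ∂volume)
            + (C₁ * (∫ x in Ω, indDu x ∂volume) + ∫ x in Ω, indL x ∂volume) :=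
          add_le_add habs1 habs2
      _ = (C₁ + r - 1) * (∫ x in Ω, indDu x ∂volume)
            + (∫ x in Ω, ‖gradient ζ x‖ ^ r ∂volume) + ∫ x in Ω, indL x ∂volume := by ring
  -- the approximating sequence
  set εs : ℕ → ℝ := fun n => 1 / (n + 1) with hεsdef
  have hεs0 : ∀ n, 0 < εs n := fun n => by positivity
  have hεs1 : ∀ n, εs n ≤ 1 := by
    intro n
    rw [hεsdef]
    apply div_le_one_of_le₀
    · exact le_add_of_nonneg_left (Nat.cast_nonneg n)
    · positivity
  have hεstend : Tendsto εs atTop (𝓝 0) := tendsto_one_div_add_atTop_nhds_zero_nat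
  have hrpow_lim : ∀ s : ℝ, Tendsto (fun n => (s + εs n) ^ r) atTop (𝓝 (s ^ r)) := by
    intro s
    have hc : ContinuousAt (fun t : ℝ => t ^ r) s := Real.continuousAt_rpow_const s r (Or.inr hr0.le)
    have h2 : Tendsto (fun n => s + εs n) atTop (𝓝 s) := by
      simpa using tendsto_const_nhds.add hεstend
    exact hc.tendsto.comp h2
  have hεr_lim : Tendsto (fun n => εs n ^ r) atTop (𝓝 0) := by
    have := hrpow_lim 0
    simp only [zero_add, Real.zero_rpow hr0.ne'] at this
    exact this
  -- limit of the measure integrals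
  have hμlim : ∀ (ν : Measure (EuclideanSpace ℝ (Fin N))), IsFiniteMeasure ν →
      Tendsto (fun n => ∫ x, ((ζ x + εs n) ^ r - εs n ^ r) ∂ν) atTop
        (𝓝 (∫ x, ζ x ^ r ∂ν)) := by
    intro ν hν
    apply tendsto_integral_of_dominated_convergence (fun _ => (M + 1) ^ r)
    · intro n
      exact (((hψcont (εs n)).sub continuous_const)).aestronglyMeasurable
    · exact integrable_const _
    · intro n
      apply ae_of_all
      intro x
      have h4 : 0 ≤ εs n ^ r := Real.rpow_nonneg (hεs0 n).le _
      have h5 : εs n ^ r ≤ (ζ x + εs n) ^ r :=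
        Real.rpow_le_rpow (hεs0 n).le (le_add_of_nonneg_left (hζ0 x)) hr0.le
      rw [Real.norm_eq_abs, abs_of_nonneg (sub_nonneg.mpr h5)]
      have h6 := hψbd (εs n) (hεs0 n) (hεs1 n) x
      linarith
    · apply ae_of_all
      intro x
      have := (hrpow_lim (ζ x)).sub hεr_lim
      simpa using this
  -- limit of the Du-term
  have hDulim : Tendsto
      (fun n => ∫ x in Ω, K.indicator (fun y => ‖Du y‖ ^ q * (ζ y + εs n) ^ r) x ∂volume)
      atTop (𝓝 (∫ x in Ω, ‖Du x‖ ^ q * ζ x ^ r ∂volume)) := by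
    have htarget : (fun x => ‖Du x‖ ^ q * ζ x ^ r) =
        K.indicator fun y => ‖Du y‖ ^ q * ζ y ^ r := by
      funext x
      by_cases hxK : x ∈ K
      · rw [Set.indicator_of_mem hxK]
      · rw [Set.indicator_of_notMem hxK, image_eq_zero_of_notMem_tsupport hxK,
          Real.zero_rpow hr0.ne', mul_zero]
    rw [htarget]
    apply tendsto_integral_of_dominated_convergence
      (K.indicator fun y => (M + 1) ^ r * ‖Du y‖ ^ q)
    · intro n
      exact ((mDuq.mul (hψcont (εs n)).measurable).indicator hKm).aestronglyMeasurable
    · exact indInt _ (hDuK.const_mul _)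
    · intro n
      apply ae_of_all
      intro x
      by_cases hxK : x ∈ K
      · rw [Set.indicator_of_mem hxK, Set.indicator_of_mem hxK]
        have h4 : 0 ≤ ‖Du x‖ ^ q := Real.rpow_nonneg (norm_nonneg _) _
        have h5 : 0 ≤ (ζ x + εs n) ^ r := Real.rpow_nonneg (by linarith [hζ0 x, hεs0 n]) _
        rw [Real.norm_eq_abs, abs_of_nonneg (mul_nonneg h4 h5)]
        calc ‖Du x‖ ^ q * (ζ x + εs n) ^ r ≤ ‖Du x‖ ^ q * (M + 1) ^ r :=
              mul_le_mul_of_nonneg_left (hψbd (εs n) (hεs0 n) (hεs1 n) x) h4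
          _ = (M + 1) ^ r * ‖Du x‖ ^ q := mul_comm _ _
      · rw [Set.indicator_of_notMem hxK, Set.indicator_of_notMem hxK]
        simp
    · apply ae_of_all
      intro x
      by_cases hxK : x ∈ K
      · simp only [Set.indicator_of_mem hxK]
        exact (hrpow_lim (ζ x)).const_mul _
      · simp only [Set.indicator_of_notMem hxK]
        exact tendsto_const_nhds
  -- limit of the ℓ-term
  have hLlim : Tendsto
      (fun n => ∫ x in Ω, K.indicator (fun y => ℓ y * (ζ y + εs n) ^ r) x ∂volume)
      atTop (𝓝 (∫ x in Ω, ℓ x * ζ x ^ r ∂volume)) := by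
    have htarget : (fun x => ℓ x * ζ x ^ r) = K.indicator fun y => ℓ y * ζ y ^ r := by
      funext x
      by_cases hxK : x ∈ K
      · rw [Set.indicator_of_mem hxK]
      · rw [Set.indicator_of_notMem hxK, image_eq_zero_of_notMem_tsupport hxK,
          Real.zero_rpow hr0.ne', mul_zero]
    rw [htarget]
    have hℓK : IntegrableOn ℓ K volume := hℓint.mono_set hζΩ
    apply tendsto_integral_of_dominated_convergence
      (K.indicator fun y => (M + 1) ^ r * |ℓ y|)
    · intro n
      exact (hℓint.aestronglyMeasurable.mul (hψcont (εs n)).aestronglyMeasurable).indicator hKm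
    · exact indInt _ (hℓK.abs.const_mul _)
    · intro n
      apply ae_of_all
      intro x
      by_cases hxK : x ∈ K
      · rw [Set.indicator_of_mem hxK, Set.indicator_of_mem hxK]
        have h5 : 0 ≤ (ζ x + εs n) ^ r := Real.rpow_nonneg (by linarith [hζ0 x, hεs0 n]) _
        rw [Real.norm_eq_abs, abs_of_nonneg (mul_nonneg (hℓpos x) h5)]
        calc ℓ x * (ζ x + εs n) ^ r ≤ ℓ x * (M + 1) ^ r :=
              mul_le_mul_of_nonneg_left (hψbd (εs n) (hεs0 n) (hεs1 n) x) (hℓpos x)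
          _ ≤ (M + 1) ^ r * |ℓ x| := by rw [abs_of_nonneg (hℓpos x)]; rw [mul_comm]
      · rw [Set.indicator_of_notMem hxK, Set.indicator_of_notMem hxK]
        simp
    · apply ae_of_all
      intro x
      by_cases hxK : x ∈ K
      · simp only [Set.indicator_of_mem hxK]
        exact (hrpow_lim (ζ x)).const_mul _
      · simp only [Set.indicator_of_notMem hxK]
        exact tendsto_const_nhds
  -- pass to the limit
  have hF : Tendsto
      (fun n => |(∫ x, ((ζ x + εs n) ^ r - εs n ^ r) ∂μp)
        - ∫ x, ((ζ x + εs n) ^ r - εs n ^ r) ∂μm|) atTop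
      (𝓝 |(∫ x, ζ x ^ r ∂μp) - ∫ x, ζ x ^ r ∂μm|) :=
    ((hμlim μp inferInstance).sub (hμlim μm inferInstance)).abs
  have hG : Tendsto
      (fun n => (C₁ + r - 1) *
          (∫ x in Ω, K.indicator (fun y => ‖Du y‖ ^ q * (ζ y + εs n) ^ r) x ∂volume)
        + (∫ x in Ω, ‖gradient ζ x‖ ^ r ∂volume)
        + ∫ x in Ω, K.indicator (fun y => ℓ y * (ζ y + εs n) ^ r) x ∂volume) atTop
      (𝓝 ((C₁ + r - 1) * (∫ x in Ω, ‖Du x‖ ^ q * ζ x ^ r ∂volume)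
        + (∫ x in Ω, ‖gradient ζ x‖ ^ r ∂volume)
        + ∫ x in Ω, ℓ x * ζ x ^ r ∂volume)) :=
    (((hDulim.const_mul _).add tendsto_const_nhds).add hLlim)
  exact le_of_tendsto_of_tendsto' hF hG fun n => key (εs n) (hεs0 n) (hεs1 n)
end

section
/- Let $1 < p < N$, $\tilde q = p-1+p/N$, $\tilde q < q < p$, and let $B = B(0,1) \subset \mathbb{R}^N$ be the open unit ball. Set $\gamma = \frac{p-q}{q+1-p} > 0$. Then there exists $C > 0$ such that the function $u_C(x) = C(|x|^{-\gamma} - 1)$ satisfies $-\Delta_p u_C = |\nabla u_C|^q$ in $B \setminus \{0\}$, $u_C = 0$ on $\partial B$, and $u_C \in W^{1,p}(B)$. -/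
/-!
For a radial profile `u = C (‖x‖ ^ a - 1)` everything stays a power of `‖x‖`:
`∇u = C a ‖x‖ ^ (a - 2) • x`, and the divergence of `y ↦ (κ ‖y‖ ^ m) • y` is `κ (N + m) ‖x‖ ^ m`.
With `a = -γ` both sides of `-Δ_p u = |∇u| ^ q` are multiples of `‖x‖ ^ (-(γ + 1) q)`; this is
what fixes `γ`. Equating the coefficients asks for `(C γ) ^ (q + 1 - p) = N - 1 - (γ + 1) (p - 1)`,
which is positive because `(γ + 1) p < N`, i.e. `q > p - 1 + p / N`. The same inequality makes
`|∇u| ^ p ≍ ‖x‖ ^ (-(γ + 1) p)` integrable on the unit ball.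
-/

open MeasureTheory Metric Filter Module InnerProductSpace
open scoped Topology

section InnerProductSpace

variable {E : Type*} [NormedAddCommGroup E] [InnerProductSpace ℝ E]

theorem hasStrictFDerivAt_norm_rpow_of_ne_zero {x : E} (hx : x ≠ 0) (m : ℝ) :
    HasStrictFDerivAt (fun y : E ↦ ‖y‖ ^ m) ((m * ‖x‖ ^ (m - 2)) • innerSL ℝ x) x := by
  convert! (hasStrictFDerivAt_norm_sq x).rpow_const (p := m / 2) (by simp [hx]) using 0
  simp_rw [← Real.rpow_natCast_mul (norm_nonneg _), ← Nat.cast_smul_eq_nsmul ℝ, smul_smul]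
  ring_nf

theorem hasGradientAt_mul_norm_rpow_sub_one [CompleteSpace E] {x : E} (hx : x ≠ 0) (C a : ℝ) :
    HasGradientAt (fun y : E ↦ C * (‖y‖ ^ a - 1)) ((C * a * ‖x‖ ^ (a - 2)) • x) x := by
  rw [hasGradientAt_iff_hasFDerivAt]
  refine ((((hasStrictFDerivAt_norm_rpow_of_ne_zero hx a).hasFDerivAt).sub_const 1).const_mul
    C).congr_fderiv ?_
  ext v
  simp [mul_assoc]

theorem norm_mul_norm_rpow_smul_self (c b : ℝ) {y : E} (hy : y ≠ 0) :
    ‖(c * ‖y‖ ^ b) • y‖ = |c| * ‖y‖ ^ (b + 1) := by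
  have hy' : 0 < ‖y‖ := norm_pos_iff.mpr hy
  rw [norm_smul, Real.norm_eq_abs, abs_mul, abs_of_pos (by positivity : 0 < ‖y‖ ^ b), mul_assoc,
    ← Real.rpow_add_one hy'.ne']

theorem norm_rpow_smul_mul_norm_rpow_smul_self (c b r : ℝ) {y : E} (hy : y ≠ 0) :
    ‖(c * ‖y‖ ^ b) • y‖ ^ r • (c * ‖y‖ ^ b) • y
      = (|c| ^ r * c * ‖y‖ ^ ((b + 1) * r + b)) • y := by
  have hy' : 0 < ‖y‖ := norm_pos_iff.mpr hy
  rw [smul_smul, norm_mul_norm_rpow_smul_self c b hy, Real.mul_rpow (abs_nonneg c) (by positivity),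
    ← Real.rpow_mul hy'.le, Real.rpow_add hy']
  congr 1
  ring

theorem measurable_gradient [CompleteSpace E] [FiniteDimensional ℝ E] [MeasurableSpace E]
    [BorelSpace E] (f : E → ℝ) : Measurable (gradient f) := by
  unfold gradient
  fun_prop

end InnerProductSpace

theorem norm_mul_norm_rpow_sub_one_le {E : Type*} [NormedAddCommGroup E] (C : ℝ) {a : ℝ}
    (ha : a ≤ 0) {x : E} (hx : x ≠ 0) (hx1 : ‖x‖ ≤ 1) :
    ‖C * (‖x‖ ^ a - 1)‖ ≤ |C| * ‖x‖ ^ a := by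
  have h1 : 1 ≤ ‖x‖ ^ a :=
    Real.one_le_rpow_of_pos_of_le_one_of_nonpos (norm_pos_iff.mpr hx) hx1 ha
  rw [Real.norm_eq_abs, abs_mul, abs_of_nonneg (by linarith : 0 ≤ ‖x‖ ^ a - 1)]
  gcongr
  linarith

section Integrability

variable {E : Type*} [NormedAddCommGroup E] [NormedSpace ℝ E] [FiniteDimensional ℝ E]
  [MeasurableSpace E] [BorelSpace E] {μ : Measure E} [μ.IsAddHaarMeasure]

theorem memLp_restrict_ball_of_norm_le_rpow {F : Type*} [NormedAddCommGroup F]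
    (hd : 1 ≤ finrank ℝ E) {f : E → F} {p C s r : ℝ} (hp : 0 < p) (hC : 0 ≤ C)
    (hsp : s * p < finrank ℝ E) (h_decay : ∀ᵐ x ∂μ.restrict (ball 0 r), ‖f x‖ ≤ C * ‖x‖ ^ (-s))
    (h_meas : AEStronglyMeasurable f μ) :
    MemLp f (ENNReal.ofReal p) (μ.restrict (ball 0 r)) := by
  rw [← integrable_norm_rpow_iff h_meas.restrict (by simpa using hp) ENNReal.ofReal_ne_top,
    ENNReal.toReal_ofReal hp.le]
  refine integrableOn_ball_of_norm_le_rpow hd (C := C ^ p) hsp ?_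
    (h_meas.norm.aemeasurable.pow_const p).aestronglyMeasurable
  filter_upwards [h_decay] with x hx
  calc ‖‖f x‖ ^ p‖ = ‖f x‖ ^ p := by rw [Real.norm_eq_abs, abs_of_nonneg (by positivity)]
    _ ≤ (C * ‖x‖ ^ (-s)) ^ p := by gcongr
    _ = C ^ p * ‖x‖ ^ (-(s * p)) := by
      rw [Real.mul_rpow hC (by positivity), ← Real.rpow_mul (norm_nonneg x), neg_mul]

variable [Nontrivial E] {C γ p : ℝ}

theorem memLp_mul_norm_rpow_sub_one (hp : 0 < p) (hγ : 0 ≤ γ) (hγp : γ * p < finrank ℝ E) :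
    MemLp (fun x : E => C * (‖x‖ ^ (-γ) - 1)) (ENNReal.ofReal p) (μ.restrict (ball 0 1)) := by
  refine memLp_restrict_ball_of_norm_le_rpow finrank_pos hp (abs_nonneg C) hγp ?_
    (by fun_prop : Measurable _).aestronglyMeasurable
  filter_upwards [ae_restrict_of_ae (μ.ae_ne 0), ae_restrict_mem measurableSet_ball]
    with x hx0 hx1
  exact norm_mul_norm_rpow_sub_one_le C (by linarith) hx0 (mem_ball_zero_iff.mp hx1).le

end Integrability

theorem memLp_gradient_mul_norm_rpow_sub_one {E : Type*} [NormedAddCommGroup E]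
    [InnerProductSpace ℝ E] [FiniteDimensional ℝ E] [MeasurableSpace E] [BorelSpace E]
    [Nontrivial E] {μ : Measure E} [μ.IsAddHaarMeasure] {C γ p : ℝ} (hp : 0 < p)
    (hγp : (γ + 1) * p < finrank ℝ E) :
    MemLp (gradient fun x : E => C * (‖x‖ ^ (-γ) - 1)) (ENNReal.ofReal p)
      (μ.restrict (ball 0 1)) := by
  refine memLp_restrict_ball_of_norm_le_rpow finrank_pos hp (abs_nonneg (C * γ)) hγp ?_
    (measurable_gradient _).aestronglyMeasurable
  filter_upwards [ae_restrict_of_ae (μ.ae_ne 0)] with x hx0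
  rw [(hasGradientAt_mul_norm_rpow_sub_one hx0 C _).gradient,
    norm_mul_norm_rpow_smul_self _ _ hx0, mul_neg, abs_neg, show -γ - 2 + 1 = -(γ + 1) by ring]

section Euclidean

variable {N : ℕ}

/-- Like `fderiv`, this is `0` at points where `F` is not differentiable. -/
noncomputable def divergence (F : EuclideanSpace ℝ (Fin N) → EuclideanSpace ℝ (Fin N))
    (x : EuclideanSpace ℝ (Fin N)) : ℝ :=
  ∑ i, fderiv ℝ F x (EuclideanSpace.single i 1) i

noncomputable def pLaplacian (p : ℝ) (u : EuclideanSpace ℝ (Fin N) → ℝ)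
    (x : EuclideanSpace ℝ (Fin N)) : ℝ :=
  divergence (fun y => ‖gradient u y‖ ^ (p - 2) • gradient u y) x

theorem Filter.EventuallyEq.divergence_eq
    {F G : EuclideanSpace ℝ (Fin N) → EuclideanSpace ℝ (Fin N)} {x : EuclideanSpace ℝ (Fin N)}
    (h : F =ᶠ[𝓝 x] G) : divergence F x = divergence G x := by
  rw [divergence, divergence, h.fderiv_eq]

theorem divergence_smul_id {g : EuclideanSpace ℝ (Fin N) → ℝ}
    {g' : EuclideanSpace ℝ (Fin N) →L[ℝ] ℝ} {x : EuclideanSpace ℝ (Fin N)}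
    (hg : HasFDerivAt g g' x) :
    divergence (fun y => g y • y) x = N * g x + g' x := by
  have hg'x : g' x = ∑ i, x i * g' (EuclideanSpace.single i 1) := by
    conv_lhs => rw [← (EuclideanSpace.basisFun (Fin N) ℝ).sum_repr x]
    simp
  have hF : HasFDerivAt (fun y => g y • y) _ x := hg.fun_smul (hasFDerivAt_id x)
  rw [divergence, hF.fderiv, hg'x]
  simp [Finset.sum_add_distrib, mul_comm]

theorem divergence_const_mul_norm_rpow_smul {x : EuclideanSpace ℝ (Fin N)} (hx : x ≠ 0)
    (κ m : ℝ) : divergence (fun y => (κ * ‖y‖ ^ m) • y) x = κ * (N + m) * ‖x‖ ^ m := by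
  rw [divergence_smul_id
    (((hasStrictFDerivAt_norm_rpow_of_ne_zero hx m).hasFDerivAt).const_mul κ)]
  simp only [FunLike.coe_smul, Pi.smul_apply, innerSL_apply_apply,
    real_inner_self_eq_norm_sq, smul_eq_mul]
  rw [← Real.rpow_natCast, ← mul_assoc, mul_assoc _ (‖x‖ ^ (m - 2)),
    ← Real.rpow_add (norm_pos_iff.mpr hx)]
  push_cast
  ring_nf

theorem pLaplacian_mul_norm_rpow_sub_one {x : EuclideanSpace ℝ (Fin N)} (hx : x ≠ 0)
    (C a p : ℝ) :
    pLaplacian p (fun y => C * (‖y‖ ^ a - 1)) x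
      = |C * a| ^ (p - 2) * (C * a) * (N + (a - 1) * (p - 1) - 1)
          * ‖x‖ ^ ((a - 1) * (p - 1) - 1) := by
  have hflux : (fun y => ‖gradient (fun y => C * (‖y‖ ^ a - 1)) y‖ ^ (p - 2) •
      gradient (fun y => C * (‖y‖ ^ a - 1)) y) =ᶠ[𝓝 x]
      fun y => (|C * a| ^ (p - 2) * (C * a) * ‖y‖ ^ ((a - 1) * (p - 1) - 1)) • y := by
    filter_upwards [isOpen_ne.mem_nhds hx] with y hy
    rw [(hasGradientAt_mul_norm_rpow_sub_one hy C a).gradient,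
      norm_rpow_smul_mul_norm_rpow_smul_self _ _ _ hy]
    ring_nf
  rw [pLaplacian, hflux.divergence_eq, divergence_const_mul_norm_rpow_smul hx]
  ring

theorem neg_pLaplacian_mul_norm_rpow_sub_one {C γ p q : ℝ} (hC : 0 < C) (hγ : 0 < γ)
    (hγq : (γ + 1) * (q + 1 - p) = 1)
    (hCγ : (C * γ) ^ (q + 1 - p) = N - 1 - (γ + 1) * (p - 1))
    {x : EuclideanSpace ℝ (Fin N)} (hx : x ≠ 0) :
    -pLaplacian p (fun y => C * (‖y‖ ^ (-γ) - 1)) x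
      = ‖gradient (fun y => C * (‖y‖ ^ (-γ) - 1)) x‖ ^ q := by
  have ht : 0 < C * γ := mul_pos hC hγ
  have hx' : 0 < ‖x‖ := norm_pos_iff.mpr hx
  rw [pLaplacian_mul_norm_rpow_sub_one hx, (hasGradientAt_mul_norm_rpow_sub_one hx C _).gradient,
    norm_mul_norm_rpow_smul_self _ _ hx, mul_neg, abs_neg, abs_of_pos ht,
    Real.mul_rpow ht.le (by positivity), ← Real.rpow_mul hx'.le,
    show (-γ - 2 + 1) * q = (-γ - 1) * (p - 1) - 1 by linear_combination -hγq,
    show q = p - 2 + 1 + (q + 1 - p) by ring, Real.rpow_add ht, Real.rpow_add ht,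
    Real.rpow_one, hCγ]
  ring

end Euclidean

theorem stmt8_general (N : ℕ) (p q : ℝ) (hp : 1 < p) (hpN : p < N)
    (hq1 : p - 1 + p / N < q) (hq2 : q < p) :
    0 < (p - q) / (q + 1 - p) ∧
    ∃ C : ℝ, 0 < C ∧
      (let u : EuclideanSpace ℝ (Fin N) → ℝ :=
        fun x => C * (‖x‖ ^ (-((p - q) / (q + 1 - p))) - 1)
       -- the p-Laplacian `div(|∇u|^{p-2}∇u)` computed pointwise
       (∀ x ∈ Metric.ball (0 : EuclideanSpace ℝ (Fin N)) 1 \ {0},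
          -(∑ i : Fin N,
              (fderiv ℝ (fun y => ‖gradient u y‖ ^ (p - 2) • gradient u y) x
                (EuclideanSpace.single i (1 : ℝ))) i)
            = ‖gradient u x‖ ^ q) ∧
       (∀ x : EuclideanSpace ℝ (Fin N), ‖x‖ = 1 → u x = 0) ∧
       MemLp u (ENNReal.ofReal p)
         (volume.restrict (Metric.ball (0 : EuclideanSpace ℝ (Fin N)) 1)) ∧
       MemLp (fun x => gradient u x) (ENNReal.ofReal p)
         (volume.restrict (Metric.ball (0 : EuclideanSpace ℝ (Fin N)) 1))) := by
  set γ := (p - q) / (q + 1 - p) with hγ_def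
  have hN1 : (1 : ℝ) < N := hp.trans hpN
  have hpN' : p < N * (q + 1 - p) := (div_lt_iff₀' (by positivity)).mp (by linarith)
  have hden : 0 < q + 1 - p := by nlinarith
  have hγ : 0 < γ := div_pos (by linarith) hden
  have hγq : (γ + 1) * (q + 1 - p) = 1 := by rw [hγ_def]; field_simp; ring
  have hγp : (γ + 1) * p < N := by
    calc (γ + 1) * p < (γ + 1) * (N * (q + 1 - p)) := by gcongr
      _ = N := by linear_combination (N : ℝ) * hγq
  have hK : 0 < (N : ℝ) - 1 - (γ + 1) * (p - 1) := by nlinarith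
  set C := ((N : ℝ) - 1 - (γ + 1) * (p - 1)) ^ (q + 1 - p)⁻¹ / γ
  have hC : 0 < C := by positivity
  have hCγ : (C * γ) ^ (q + 1 - p) = N - 1 - (γ + 1) * (p - 1) := by
    rw [div_mul_cancel₀ _ hγ.ne', Real.rpow_inv_rpow hK.le hden.ne']
  have : NeZero N := ⟨by rintro rfl; norm_num at hN1⟩
  refine ⟨hγ, C, hC, fun x hx => neg_pLaplacian_mul_norm_rpow_sub_one hC hγ hγq hCγ hx.2,
    fun x hx => by simp [hx], memLp_mul_norm_rpow_sub_one (by linarith) hγ.le ?_,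
    memLp_gradient_mul_norm_rpow_sub_one (by linarith) ?_⟩
  · rw [finrank_euclideanSpace_fin]; nlinarith
  · rwa [finrank_euclideanSpace_fin]

/-- Sharpness example: for `1 < p < N` and `q̃ = p-1+p/N < q < p`, with
`γ = (p-q)/(q+1-p) > 0`, there is `C > 0` such that `u_C(x) = C(|x|^{-γ} - 1)`
satisfies `-Δ_p u_C = |∇ u_C|^q` pointwise in `B(0,1) \ {0}`, vanishes on
`∂B(0,1)`, and belongs to `W^{1,p}(B(0,1))`. -/
theorem stmt8 (N : ℕ) (p q : ℝ) (hN : 2 ≤ N) (hp : 1 < p) (hpN : p < N)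
    (hq1 : p - 1 + p / N < q) (hq2 : q < p) :
    0 < (p - q) / (q + 1 - p) ∧
    ∃ C : ℝ, 0 < C ∧
      (let u : EuclideanSpace ℝ (Fin N) → ℝ :=
        fun x => C * (‖x‖ ^ (-((p - q) / (q + 1 - p))) - 1)
       -- the p-Laplacian `div(|∇u|^{p-2}∇u)` computed pointwise
       (∀ x ∈ Metric.ball (0 : EuclideanSpace ℝ (Fin N)) 1 \ {0},
          -(∑ i : Fin N,
              (fderiv ℝ (fun y => ‖gradient u y‖ ^ (p - 2) • gradient u y) x
                (EuclideanSpace.single i (1 : ℝ))) i)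
            = ‖gradient u x‖ ^ q) ∧
       (∀ x : EuclideanSpace ℝ (Fin N), ‖x‖ = 1 → u x = 0) ∧
       MemLp u (ENNReal.ofReal p)
         (volume.restrict (Metric.ball (0 : EuclideanSpace ℝ (Fin N)) 1)) ∧
       MemLp (fun x => gradient u x) (ENNReal.ofReal p)
         (volume.restrict (Metric.ball (0 : EuclideanSpace ℝ (Fin N)) 1))) :=
  stmt8_general N p q hp hpN hq1 hq2
end

section
/- Let $1 < p < N$, $q < \tilde q := p-1+p/N$, $q > 0$, and set $m_0 = p/q$, $\overline{m} = Np/(Np-N+p)$. Then $m_0 > \overline{m}$. Moreover, define $m^* = Nm/(N-m)$ for $1 < m < N$, and recursively $m_{n+1} = (p-1)m_n^*/q$ whenever $m_n < N$. Then the sequence $(m_n)$ is strictly increasing as long as it is defined, and there exists $n_0$ such that $m_{n_0} \geq N$. -/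
/-!
Multiplying `q < p - 1 + p / N` by `N` gives `q N < (p - 1) N + p`, which is both the inequality
`m̄ < p / q` and the statement that the ratio `c = (p - 1) N / ((N - m₀) q)` exceeds `1`.
Since `N m / (N - m)` increases in `m`, every step taken from `m ≥ m₀` multiplies by at least `c`,
so `m_n ≥ cⁿ m₀` as long as the iteration stays below `N`; this forces it to reach `N`.
-/

section GeometricEscape

variable {f : ℝ → ℝ} {u : ℕ → ℝ} {a₀ c N : ℝ}

theorem pow_mul_le_of_forall_lt (hc : 1 ≤ c) (ha₀ : 0 < a₀)
    (hf : ∀ a, a₀ ≤ a → a < N → c * a ≤ f a) (hu₀ : u 0 = a₀)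
    (hu : ∀ n, u n < N → u (n + 1) = f (u n)) (n : ℕ) (hlt : ∀ k < n, u k < N) :
    c ^ n * a₀ ≤ u n := by
  induction n with
  | zero => simp [hu₀]
  | succ n ih =>
    have hn : c ^ n * a₀ ≤ u n := ih fun k hk => hlt k (hk.trans n.lt_succ_self)
    have hun : u n < N := hlt n n.lt_succ_self
    have ha₀_le : a₀ ≤ u n := (le_mul_of_one_le_left ha₀.le (one_le_pow₀ hc)).trans hn
    calc c ^ (n + 1) * a₀ = c * (c ^ n * a₀) := by ring
      _ ≤ c * u n := by gcongr
      _ ≤ f (u n) := hf _ ha₀_le hun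
      _ = u (n + 1) := (hu n hun).symm

theorem lt_succ_of_forall_le_lt (hc : 1 < c) (ha₀ : 0 < a₀)
    (hf : ∀ a, a₀ ≤ a → a < N → c * a ≤ f a) (hu₀ : u 0 = a₀)
    (hu : ∀ n, u n < N → u (n + 1) = f (u n)) (n : ℕ) (hlt : ∀ k ≤ n, u k < N) :
    u n < u (n + 1) := by
  have hun : u n < N := hlt n le_rfl
  have hpow : c ^ n * a₀ ≤ u n :=
    pow_mul_le_of_forall_lt hc.le ha₀ hf hu₀ hu n fun k hk => hlt k hk.le
  have ha₀_le : a₀ ≤ u n := (le_mul_of_one_le_left ha₀.le (one_le_pow₀ hc.le)).trans hpow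
  calc u n < c * u n := lt_mul_left (ha₀.trans_le ha₀_le) hc
    _ ≤ f (u n) := hf _ ha₀_le hun
    _ = u (n + 1) := (hu n hun).symm

theorem exists_le_of_one_lt (hc : 1 < c) (ha₀ : 0 < a₀)
    (hf : ∀ a, a₀ ≤ a → a < N → c * a ≤ f a) (hu₀ : u 0 = a₀)
    (hu : ∀ n, u n < N → u (n + 1) = f (u n)) :
    ∃ n, N ≤ u n := by
  by_contra! hall
  obtain ⟨n, hn⟩ := pow_unbounded_of_one_lt (N / a₀) hc
  have hpow : c ^ n * a₀ ≤ u n := pow_mul_le_of_forall_lt hc.le ha₀ hf hu₀ hu n fun k _ => hall k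
  have : N < c ^ n * a₀ := (div_lt_iff₀ ha₀).mp hn
  linarith [hall n]

end GeometricEscape

section Bootstrap

variable {N p q : ℝ}

/-- The map `m ↦ (p - 1) m^* / q`, where `m^* = N m / (N - m)` is the Sobolev conjugate. -/
noncomputable def bootstrapStep (N p q m : ℝ) : ℝ := (p - 1) * (N * m / (N - m)) / q

theorem mul_le_bootstrapStep {a₀ a : ℝ} (hq : 0 < q) (hp : 1 ≤ p) (ha₀ : 0 < a₀) (ha : a₀ ≤ a)
    (haN : a < N) : (p - 1) * N / ((N - a₀) * q) * a ≤ bootstrapStep N p q a := by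
  have hNa : 0 < N - a := by linarith
  have hnum : 0 ≤ (p - 1) * N * a := by
    have : 0 < N := by linarith
    have : 0 < a := by linarith
    positivity
  calc (p - 1) * N / ((N - a₀) * q) * a = (p - 1) * N * a / ((N - a₀) * q) := by ring
    _ ≤ (p - 1) * N * a / ((N - a) * q) := by gcongr
    _ = bootstrapStep N p q a := by unfold bootstrapStep; field_simp

theorem one_lt_bootstrap_ratio (hq : 0 < q) (hqN : q * N < (p - 1) * N + p) (h₀ : p / q < N) :
    1 < (p - 1) * N / ((N - p / q) * q) := by
  have hden : (N - p / q) * q = q * N - p := by field_simp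
  rw [hden, one_lt_div (by nlinarith [(div_lt_iff₀ hq).mp h₀])]
  linarith

theorem bootstrap_lt_div (hN : 0 < N) (hp : 0 < p) (hq : 0 < q)
    (hqN : q * N < (p - 1) * N + p) : N * p / (N * p - N + p) < p / q := by
  rw [div_lt_div_iff₀ (by nlinarith) hq]
  nlinarith

theorem bootstrap_orbit {m : ℕ → ℝ} (hp : 1 < p) (hq : 0 < q) (hqN : q * N < (p - 1) * N + p)
    (hm₀ : m 0 = p / q) (hrec : ∀ n, m n < N → m (n + 1) = bootstrapStep N p q (m n)) :
    (∀ n, (∀ k ≤ n, m k < N) → m n < m (n + 1)) ∧ ∃ n₀, N ≤ m n₀ := by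
  rcases lt_or_ge (p / q) N with h₀ | h₀
  · have hc := one_lt_bootstrap_ratio hq hqN h₀
    have ha₀ : 0 < p / q := by positivity
    have hf (a : ℝ) (ha : p / q ≤ a) (haN : a < N) := mul_le_bootstrapStep hq hp.le ha₀ ha haN
    exact ⟨lt_succ_of_forall_le_lt hc ha₀ hf hm₀ hrec, exists_le_of_one_lt hc ha₀ hf hm₀ hrec⟩
  · exact ⟨fun _ h => absurd (h 0 (Nat.zero_le _)) (hm₀ ▸ h₀.not_gt), 0, hm₀ ▸ h₀⟩

end Bootstrap

theorem stmt9_general (N p q : ℝ) (hp : 1 < p) (hpN : p < N)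
    (hq : 0 < q) (hqt : q < p - 1 + p / N)
    (m : ℕ → ℝ) (hm0 : m 0 = p / q)
    (hrec : ∀ n, m n < N → m (n + 1) = (p - 1) * (N * m n / (N - m n)) / q) :
    N * p / (N * p - N + p) < p / q ∧
    (∀ n, (∀ k ≤ n, m k < N) → m n < m (n + 1)) ∧
    (∃ n₀, N ≤ m n₀) := by
  have hN : 0 < N := by linarith
  have hqN : q * N < (p - 1) * N + p := by
    have := mul_lt_mul_of_pos_right hqt hN
    rwa [add_mul, div_mul_cancel₀ p hN.ne'] at this
  exact ⟨bootstrap_lt_div hN (by linarith) hq hqN, bootstrap_orbit hp hq hqN hm0 hrec⟩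

/-- Bootstrap exponent iteration: for `1 < p < N`, `0 < q < q̃ = p-1+p/N`, with
`m₀ = p/q` and `m̄ = Np/(Np-N+p)`, one has `m₀ > m̄`; the recursion
`m_{n+1} = (p-1) m_n^* / q` with `m^* = Nm/(N-m)` (defined while `m_n < N`) is
strictly increasing as long as it stays below `N`, and reaches `≥ N` in finitely
many steps. -/
theorem stmt9 (N p q : ℝ) (hN : 2 ≤ N) (hp : 1 < p) (hpN : p < N)
    (hq : 0 < q) (hqt : q < p - 1 + p / N)
    (m : ℕ → ℝ) (hm0 : m 0 = p / q)
    (hrec : ∀ n, m n < N → m (n + 1) = (p - 1) * (N * m n / (N - m n)) / q) :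
    N * p / (N * p - N + p) < p / q ∧
    (∀ n, (∀ k ≤ n, m k < N) → m n < m (n + 1)) ∧
    (∃ n₀, N ≤ m n₀) :=
  stmt9_general N p q hp hpN hq hqt m hm0 hrec
end
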